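/- arXiv:0904.2108 — 2 statements merged into one kernel-verified Lean document; each statement's English description precedes it below -/
import Mathlib

section
/- Let T = conv(0, λ_1 e_1, ..., λ_d e_d) ⊆ ℝ^d with positive integers λ_j, and suppose the facet of T not containing 0 has inequality description α_1 x_1 + ... + α_d x_d ≤ r with all α_j > 0 and r > 0 integers. If T is maximal lattice-free, then r = α_1 + ... + α_d. -/
/-!
The facet of `T` opposite `0` lies in the nonnegative orthant and in the hyperplane
`∑ x_j / λ_j = 1`. At a point of its relative interior no coordinate vanishes (otherwise the
segment from the vertex `λ_j e_j` through it could not be prolonged inside the facet), so the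
integer point there has all coordinates `≥ 1`, whence `∑ 1 / λ_j ≤ 1`. Conversely, if
`∑ 1 / λ_j < 1`, then the all-ones vector lies in the interior of `T`, against lattice-freeness.
So `∑ 1 / λ_j = 1`, and `α_j = r / λ_j` turns this into `r = ∑ α_j`.
-/

open Set Filter Topology

theorem eventually_lineMap_mem_of_mem_intrinsicInterior {E : Type*} [AddCommGroup E]
    [Module ℝ E] [TopologicalSpace E] [IsTopologicalAddGroup E] [ContinuousSMul ℝ E]
    {s : Set E} {p x : E} (hp : p ∈ s) (hx : x ∈ intrinsicInterior ℝ s) :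
    ∀ᶠ t in 𝓝 (1 : ℝ), AffineMap.lineMap p x t ∈ s := by
  obtain ⟨y, hy, rfl⟩ := hx
  let γ : ℝ → affineSpan ℝ s := fun t =>
    ⟨AffineMap.lineMap p y t, AffineMap.lineMap_mem t (subset_affineSpan ℝ s hp) y.2⟩
  have hγ : Tendsto γ (𝓝 1) (𝓝 y) := by
    simpa [γ] using (AffineMap.lineMap_continuous.subtype_mk _ : Continuous γ).tendsto 1
  exact (hγ.eventually (isOpen_interior.mem_nhds hy)).mono fun _ ht =>
    interior_subset (s := ((↑) ⁻¹' s : Set (affineSpan ℝ s))) ht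

theorem pos_of_mem_intrinsicInterior {E : Type*} [AddCommGroup E]
    [Module ℝ E] [TopologicalSpace E] [IsTopologicalAddGroup E] [ContinuousSMul ℝ E]
    {s : Set E} (φ : E →ₗ[ℝ] ℝ) (hs : ∀ y ∈ s, 0 ≤ φ y) {p x : E} (hp : p ∈ s)
    (hφp : 0 < φ p) (hx : x ∈ intrinsicInterior ℝ s) : 0 < φ x := by
  obtain ⟨t, hts, ht⟩ := ((eventually_lineMap_mem_of_mem_intrinsicInterior hp hx).filter_mono
    nhdsWithin_le_nhds |>.and (eventually_mem_nhdsWithin (s := Ioi 1))).exists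
  have hφt := hs _ hts
  rw [AffineMap.lineMap_apply_module, map_add, map_smul, map_smul, smul_eq_mul, smul_eq_mul]
    at hφt
  by_contra! hφx
  nlinarith [mem_Ioi.mp ht]

section
variable {d : ℕ} {μ : Fin d → ℝ}

theorem sum_div_smul_single (hμ : ∀ j, μ j ≠ 0) (x : Fin d → ℝ) :
    ∑ j, (x j / μ j) • Pi.single j (μ j) = x := by
  conv_rhs => rw [← Finset.univ_sum_single x]
  refine Finset.sum_congr rfl fun j _ => ?_
  rw [← Pi.single_smul', smul_eq_mul, div_mul_cancel₀ _ (hμ j)]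

theorem convexHull_range_single_subset (hμ : ∀ j, 0 < μ j) :
    convexHull ℝ (range fun j => Pi.single j (μ j)) ⊆
      {x | (∀ j, 0 ≤ x j) ∧ ∑ j, x j / μ j = 1} := by
  have hlin : IsLinearMap ℝ fun x : Fin d → ℝ => ∑ j, x j / μ j :=
    ⟨fun x y => by simp [add_div, Finset.sum_add_distrib],
     fun c x => by simp [Finset.mul_sum, mul_div_assoc]⟩
  refine convexHull_min ?_ ((convex_Ici 0).inter (convex_hyperplane hlin 1))
  rintro _ ⟨j, rfl⟩
  refine ⟨fun i => ?_, ?_⟩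
  · rcases eq_or_ne i j with rfl | hij
    · simpa using (hμ i).le
    · simp [Pi.single_eq_of_ne hij]
  · simp [Pi.single_apply, ite_div, (hμ j).ne']

theorem subset_convexHull_insert_zero_range_single (hμ : ∀ j, 0 < μ j) :
    {x | (∀ j, 0 ≤ x j) ∧ ∑ j, x j / μ j ≤ 1} ⊆
      convexHull ℝ (insert 0 (range fun j => Pi.single j (μ j))) := by
  rintro x ⟨hx, hsum⟩
  let w : Fin (d + 1) → ℝ := Fin.cons (1 - ∑ j, x j / μ j) fun j => x j / μ j
  let z : Fin (d + 1) → Fin d → ℝ := Fin.cons 0 fun j => Pi.single j (μ j)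
  have hxz : ∑ i, w i • z i = x := by
    simp [Fin.sum_univ_succ, w, z, sum_div_smul_single fun j => (hμ j).ne']
  rw [← hxz]
  refine (convex_convexHull ℝ _).sum_mem (fun i _ => ?_) ?_ fun i _ => subset_convexHull ℝ _ ?_
  · refine Fin.cases (by simpa [w] using hsum) (fun j => ?_) i
    simpa [w] using div_nonneg (hx j) (hμ j).le
  · simp [Fin.sum_univ_succ, w]
  · refine Fin.cases (by simp [z]) (fun j => ?_) i
    simp [z]

theorem sum_inv_le_one_of_latticePoint_mem_intrinsicInterior (hμ : ∀ j, 0 < μ j)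
    (hfacet : ∃ x ∈ intrinsicInterior ℝ (convexHull ℝ (range fun j => Pi.single j (μ j))),
      ∀ i, ∃ z : ℤ, x i = z) :
    ∑ j, (μ j)⁻¹ ≤ 1 := by
  obtain ⟨x, hx, hxℤ⟩ := hfacet
  have hxF := convexHull_range_single_subset hμ (intrinsicInterior_subset hx)
  have hx_pos (j : Fin d) : 0 < x j := by
    refine pos_of_mem_intrinsicInterior (LinearMap.proj j) (fun y hy => ?_)
      (subset_convexHull ℝ _ (mem_range_self j)) (by simpa using hμ j) hx
    exact (convexHull_range_single_subset hμ hy).1 j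
  have hx_one_le (j : Fin d) : 1 ≤ x j := by
    obtain ⟨z, hz⟩ := hxℤ j
    have hz_pos : (0 : ℝ) < z := hz ▸ hx_pos j
    rw [hz]
    exact_mod_cast (Int.cast_pos.mp hz_pos : 0 < z)
  calc ∑ j, (μ j)⁻¹ ≤ ∑ j, x j / μ j := by
        gcongr with j
        rw [inv_eq_one_div]
        exact div_le_div_of_nonneg_right (hx_one_le j) (hμ j).le
    _ = 1 := hxF.2

theorem one_le_sum_inv_of_latticeFree (hμ : ∀ j, 0 < μ j)
    (hfree : ∀ x ∈ interior (convexHull ℝ (insert 0 (range fun j => Pi.single j (μ j)))),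
      ¬ ∀ i, ∃ z : ℤ, x i = z) :
    1 ≤ ∑ j, (μ j)⁻¹ := by
  by_contra! hlt
  let U : Set (Fin d → ℝ) := univ.pi (fun _ => Ioi 0) ∩ {x | ∑ j, x j / μ j < 1}
  have hU : IsOpen U :=
    (isOpen_set_pi finite_univ fun _ _ => isOpen_Ioi).inter <|
      isOpen_lt (continuous_finsetSum _ fun j _ => (continuous_apply j).div_const _)
        continuous_const
  have hUT : U ⊆ convexHull ℝ (insert 0 (range fun j => Pi.single j (μ j))) :=
    fun x hx => subset_convexHull_insert_zero_range_single hμ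
      ⟨fun j => (mem_univ_pi.mp hx.1 j).le, hx.2.le⟩
  have h_one : (fun _ => 1 : Fin d → ℝ) ∈ U :=
    ⟨mem_univ_pi.mpr fun _ => mem_Ioi.mpr one_pos, by simpa [one_div] using hlt⟩
  exact hfree _ (interior_maximal hUT hU h_one) fun _ => ⟨1, Int.cast_one.symm⟩

theorem sum_inv_eq_one_of_maximal_latticeFree (hμ : ∀ j, 0 < μ j)
    (hfree : ∀ x ∈ interior (convexHull ℝ (insert 0 (range fun j => Pi.single j (μ j)))),
      ¬ ∀ i, ∃ z : ℤ, x i = z)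
    (hfacet : ∃ x ∈ intrinsicInterior ℝ (convexHull ℝ (range fun j => Pi.single j (μ j))),
      ∀ i, ∃ z : ℤ, x i = z) :
    ∑ j, (μ j)⁻¹ = 1 :=
  le_antisymm (sum_inv_le_one_of_latticePoint_mem_intrinsicInterior hμ hfacet)
    (one_le_sum_inv_of_latticeFree hμ hfree)

end

theorem stmt5_general (d : ℕ) (lam : Fin d → ℤ) (hlam : ∀ j, 0 < lam j)
    (v : Fin (d + 1) → (Fin d → ℝ))
    (hv0 : v 0 = 0)
    (hv : ∀ j : Fin d, v j.succ = Pi.single j ((lam j : ℝ)))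
    (T : Set (Fin d → ℝ)) (hT : T = convexHull ℝ (Set.range v))
    (α : Fin d → ℤ) (r : ℤ)
    (hfacetEq : ∀ j, α j * lam j = r)
    (hfree : ∀ x ∈ interior T, ¬ ∀ i, ∃ z : ℤ, x i = z)
    (hfacet : ∀ k : Fin (d + 1),
      ∃ x ∈ intrinsicInterior ℝ (convexHull ℝ (v '' {k}ᶜ)), ∀ i, ∃ z : ℤ, x i = z) :
    r = ∑ j, α j := by
  have hlamℝ (j : Fin d) : (0 : ℝ) < lam j := Int.cast_pos.mpr (hlam j)
  have hv_succ : v ∘ Fin.succ = fun j => Pi.single j (lam j : ℝ) := funext hv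
  have hT_eq : T = convexHull ℝ (insert 0 (range fun j => Pi.single j (lam j : ℝ))) := by
    rw [hT, Fin.range_fin_succ, hv0, ← hv_succ]
    rfl
  have hfacet_eq : v '' {0}ᶜ = range fun j => Pi.single j (lam j : ℝ) := by
    rw [← Fin.range_succ, ← range_comp, hv_succ]
  have hsum :=
    sum_inv_eq_one_of_maximal_latticeFree hlamℝ (hT_eq ▸ hfree) (hfacet_eq ▸ hfacet 0)
  have hα_eq (j : Fin d) : (α j : ℝ) = r * (lam j : ℝ)⁻¹ := by
    rw [← hfacetEq j, Int.cast_mul, mul_inv_cancel_right₀ (hlamℝ j).ne']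
  have hr_eq : (r : ℝ) = ∑ j, (α j : ℝ) := by
    simp only [hα_eq, ← Finset.mul_sum, hsum, mul_one]
  exact_mod_cast hr_eq

/-- let `T = conv(0, λ₁e₁, …, λ_d e_d)` with positive integer `λ_j`, and
suppose the facet of `T` not containing `0` is described by `α·x ≤ r` with positive
integers `α_j`, `r` and `α_j λ_j = r`. If `T` is maximal lattice-free, then
`r = α_1 + … + α_d`. -/
theorem stmt5 (d : ℕ) (hd : 1 ≤ d) (lam : Fin d → ℤ) (hlam : ∀ j, 0 < lam j)
    (v : Fin (d + 1) → (Fin d → ℝ))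
    (hv0 : v 0 = 0)
    (hv : ∀ j : Fin d, v j.succ = Pi.single j ((lam j : ℝ)))
    (T : Set (Fin d → ℝ)) (hT : T = convexHull ℝ (Set.range v))
    (α : Fin d → ℤ) (r : ℤ) (hα : ∀ j, 0 < α j) (hr : 0 < r)
    (hfacetEq : ∀ j, α j * lam j = r)
    (hfree : ∀ x ∈ interior T, ¬ ∀ i, ∃ z : ℤ, x i = z)
    (hfacet : ∀ k : Fin (d + 1),
      ∃ x ∈ intrinsicInterior ℝ (convexHull ℝ (v '' {k}ᶜ)), ∀ i, ∃ z : ℤ, x i = z) :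
    r = ∑ j, α j :=
  stmt5_general d lam hlam v hv0 hv T hT α r hfacetEq hfree hfacet
end

section
/- The simplex S_5 = conv((0,0,0), (1,0,0), (2,5,0), (3,0,5)) ⊆ ℝ^3 contains no integer point in its interior. -/
/-!
Each facet of `S₅` is cut out by a linear inequality, and an interior point satisfies all four
strictly. For an integer point `(x, y, z)` these read `z ≥ 1`, `y ≥ 1` and
`2y + 3z < 5x < 5 + y + 2z`, so `y + z ≤ 3`; the few remaining cases leave no multiple of `5`
strictly between the two bounds.
-/

open Matrix

theorem StrongDual.interior_setOf_le {E : Type*} [AddCommGroup E] [TopologicalSpace E]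
    [ContinuousAdd E] [Module ℝ E] [ContinuousSMul ℝ E] {f : StrongDual ℝ E} (hf : f ≠ 0)
    (c : ℝ) : interior {x | f x ≤ c} = {x | f x < c} := by
  change interior (f ⁻¹' Set.Iic c) = f ⁻¹' Set.Iio c
  rw [← (f.isOpenMap_of_ne_zero hf).preimage_interior_eq_interior_preimage f.continuous,
    interior_Iic]

theorem StrongDual.lt_of_mem_interior_convexHull {E : Type*} [AddCommGroup E]
    [TopologicalSpace E] [ContinuousAdd E] [Module ℝ E] [ContinuousSMul ℝ E]
    {f : StrongDual ℝ E} (hf : f ≠ 0) {s : Set E} {c : ℝ} (hs : ∀ v ∈ s, f v ≤ c) {x : E}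
    (hx : x ∈ interior (convexHull ℝ s)) : f x < c := by
  have hull_le : convexHull ℝ s ⊆ {x | f x ≤ c} :=
    convexHull_min hs (convex_halfSpace_le f.toLinearMap.isLinear c)
  exact (interior_setOf_le hf c).subset (interior_mono hull_le hx)

theorem dotProduct_lt_of_mem_interior_convexHull {n : Type*} [Fintype n] {a : n → ℝ}
    (ha : a ≠ 0) {s : Set (n → ℝ)} {c : ℝ} (hs : ∀ v ∈ s, a ⬝ᵥ v ≤ c) {x : n → ℝ}
    (hx : x ∈ interior (convexHull ℝ s)) : a ⬝ᵥ x < c := by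
  let f : StrongDual ℝ (n → ℝ) := LinearMap.toContinuousLinearMap (dotProductBilin ℝ ℝ a)
  have hf : f ≠ 0 := fun h => ha (dotProduct_self_eq_zero.mp (by simpa [f] using congr($h a)))
  simpa [f] using StrongDual.lt_of_mem_interior_convexHull hf (by simpa [f] using hs) hx

/-- the simplex `S₅ = conv((0,0,0),(1,0,0),(2,5,0),(3,0,5)) ⊆ ℝ³`
contains no integer point in its interior. -/
theorem stmt10 :
    ∀ x ∈ interior (convexHull ℝ
      ({![0, 0, 0], ![1, 0, 0], ![2, 5, 0], ![3, 0, 5]} : Set (Fin 3 → ℝ))),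
      ¬ ∀ i, ∃ z : ℤ, x i = z := by
  intro x hx hint
  obtain ⟨p, hp⟩ := hint 0
  obtain ⟨q, hq⟩ := hint 1
  obtain ⟨r, hr⟩ := hint 2
  have facet (a : Fin 3 → ℝ) (ha : a ≠ 0) (c : ℝ)
      (hv : a ⬝ᵥ ![0, 0, 0] ≤ c ∧ a ⬝ᵥ ![1, 0, 0] ≤ c ∧ a ⬝ᵥ ![2, 5, 0] ≤ c ∧
        a ⬝ᵥ ![3, 0, 5] ≤ c) :
      a 0 * p + a 1 * q + a 2 * r < c := by
    have := dotProduct_lt_of_mem_interior_convexHull ha (by simpa using hv) hx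
    simpa [dotProduct, Fin.sum_univ_three, hp, hq, hr] using this
  -- outer normals of the facets opposite `(3,0,5)`, `(2,5,0)`, `(1,0,0)` and `(0,0,0)`
  have hz := facet ![0, 0, -1] (by simp) 0 (by norm_num [dotProduct, Fin.sum_univ_succ])
  have hy := facet ![0, -1, 0] (by simp) 0 (by norm_num [dotProduct, Fin.sum_univ_succ])
  have hlow := facet ![-5, 2, 3] (by simp) 0 (by norm_num [dotProduct, Fin.sum_univ_succ])
  have hhigh := facet ![5, -1, -2] (by simp) 5 (by norm_num [dotProduct, Fin.sum_univ_succ])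
  simp only [Matrix.cons_val] at hz hy hlow hhigh
  norm_cast at hz hy hlow hhigh
  omega
end
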